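/- Non-removable discontinuity preservation theorem: Let 𝒵 and 𝒵' be open subsets of ℝ^d, let h : 𝒵 → 𝒵' be a smooth diffeomorphism, and let μ be a probability measure on ℝ^d with μ(ℝ^d \ 𝒵) = 0 that is absolutely continuous with respect to Lebesgue measure. Let ν be the pushforward of μ under h (the image measure of μ restricted to 𝒵). Then for every z' ∈ 𝒵', ν has a non-removable discontinuity at z' if and only if μ has a non-removable discontinuity at h⁻¹(z'). -/

import Mathlib

open Set MeasureTheory Topology

noncomputable section

abbrev Euc (d : ℕ) := EuclideanSpace ℝ (Fin d)

/-- Axis separator: points of `S` whose `i`-th coordinate equals `τ`. -/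
def Gamma {d : ℕ} (S : Set (Euc d)) (i : Fin d) (τ : ℝ) : Set (Euc d) :=
  {z | z ∈ S ∧ z i = τ}

/-- Positive half: points of `S` whose `i`-th coordinate is greater than `τ`. -/
def GammaPos {d : ℕ} (S : Set (Euc d)) (i : Fin d) (τ : ℝ) : Set (Euc d) :=
  {z | z ∈ S ∧ τ < z i}

/-- Negative half: points of `S` whose `i`-th coordinate is less than `τ`. -/
def GammaNeg {d : ℕ} (S : Set (Euc d)) (i : Fin d) (τ : ℝ) : Set (Euc d) :=
  {z | z ∈ S ∧ z i < τ}

/-- `Γ_S(i,τ)` is an axis-separator of `S`: it is nonempty and connected, and both of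
its halves are nonempty and connected. (`IsConnected` includes nonemptiness.) -/
def IsAxisSeparator {d : ℕ} (S : Set (Euc d)) (i : Fin d) (τ : ℝ) : Prop :=
  IsConnected (Gamma S i τ) ∧ IsConnected (GammaPos S i τ) ∧ IsConnected (GammaNeg S i τ)

/-- A smooth diffeomorphism from `S` onto `S'` with explicit inverse `hinv`. -/
structure IsSmoothDiffeoOn {d : ℕ} (h hinv : Euc d → Euc d) (S S' : Set (Euc d)) : Prop where
  mapsTo : Set.MapsTo h S S'
  mapsTo_inv : Set.MapsTo hinv S' S
  left_inv : ∀ z ∈ S, hinv (h z) = z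
  right_inv : ∀ z' ∈ S', h (hinv z') = z'
  smooth : ContDiffOn ℝ (⊤ : ℕ∞) h S
  smooth_inv : ContDiffOn ℝ (⊤ : ℕ∞) hinv S'

/-- A discrete coordination on `S`: for each axis `i`, a strictly increasing nonempty tuple
of thresholds, each giving an axis-separator of `S`. -/
structure DiscreteCoordination {d : ℕ} (S : Set (Euc d)) where
  n : Fin d → ℕ
  n_pos : ∀ i, 0 < n i
  A : (i : Fin d) → Fin (n i) → ℝ
  mono : ∀ i, StrictMono (A i)
  sep : ∀ i k, IsAxisSeparator S i (A i k)

/-- The grid of a discrete coordination: the union of all its axis-separators. -/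
def DiscreteCoordination.grid {d : ℕ} {S : Set (Euc d)} (C : DiscreteCoordination S) :
    Set (Euc d) :=
  ⋃ (i : Fin d), ⋃ (k : Fin (C.n i)), Gamma S i (C.A i k)

/-- The parallel-separator-set along axis `i`. -/
def DiscreteCoordination.axisSet {d : ℕ} {S : Set (Euc d)} (C : DiscreteCoordination S)
    (i : Fin d) : Set (Set (Euc d)) :=
  {H | ∃ k : Fin (C.n i), H = Gamma S i (C.A i k)}

/-- The axis-separator set of a discrete coordination. -/
def DiscreteCoordination.sepSet {d : ℕ} {S : Set (Euc d)} (C : DiscreteCoordination S) :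
    Set (Set (Euc d)) :=
  {H | ∃ (i : Fin d) (k : Fin (C.n i)), H = Gamma S i (C.A i k)}

/-- A backbone: a choice of one separator per axis such that they all meet in a single
point and each of them meets every separator of the grid lying on a different axis. -/
def DiscreteCoordination.HasBackbone {d : ℕ} {S : Set (Euc d)}
    (C : DiscreteCoordination S) : Prop :=
  ∃ kstar : (i : Fin d) → Fin (C.n i),
    (∃ z : Euc d, (⋂ (i : Fin d), Gamma S i (C.A i (kstar i))) = {z}) ∧
    ∀ (i j : Fin d), j ≠ i → ∀ k : Fin (C.n j),
      (Gamma S i (C.A i (kstar i)) ∩ Gamma S j (C.A j k)).Nonempty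

/-- Quantization: `Q(x;T) = Σ_k 1[x ≥ T_k]`. -/
def Q {K : ℕ} (x : ℝ) (T : Fin K → ℝ) : ℕ :=
  (Finset.univ.filter fun k : Fin K => T k ≤ x).card

/-- Quantization with order reversal: `Q⁻(x;T) = Σ_k 1[x ≤ T_k]`. -/
def Qneg {K : ℕ} (x : ℝ) (T : Fin K → ℝ) : ℕ :=
  (Finset.univ.filter fun k : Fin K => x ≤ T k).card

/-- Signed quantization: `Q^{+1} = Q` and `Q^{-1} = Q⁻`. -/
def Qsgn {K : ℕ} (s : ℤ) (x : ℝ) (T : Fin K → ℝ) : ℕ :=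
  if s = 1 then Q x T else Qneg x T

/-- `μ` (absolutely continuous w.r.t. Lebesgue) has a non-removable discontinuity at `z`
if every measurable density of `μ` w.r.t. Lebesgue measure is discontinuous at `z`. -/
def HasNonRemovableDiscont {d : ℕ} (μ : Measure (Euc d)) (z : Euc d) : Prop :=
  ∀ q : Euc d → ENNReal, Measurable q → μ = volume.withDensity q → ¬ ContinuousAt q z

/-- `T` has exactly two connected components, namely `Cp` and `Cm`. -/
def TwoComponents {d : ℕ} (T Cp Cm : Set (Euc d)) : Prop :=
  Cp ≠ Cm ∧
  (∃ x ∈ T, connectedComponentIn T x = Cp) ∧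
  (∃ x ∈ T, connectedComponentIn T x = Cm) ∧
  ∀ x ∈ T, connectedComponentIn T x = Cp ∨ connectedComponentIn T x = Cm

/-- The intersection set of a finite family of separators: points lying on at least two
distinct members. -/
def interSet {d M : ℕ} (H : Fin M → Set (Euc d)) : Set (Euc d) :=
  ⋃ (m : Fin M), ⋃ (m' : Fin M), ⋃ (_ : m ≠ m'), H m ∩ H m'

/-! A density of `μ` that is continuous at `h⁻¹ z'` is carried by the change of variables
formula to the density `y ↦ q (h⁻¹ y) * |det D(h⁻¹) y|` of `ν` on `Z'`, which is continuous
at `z'` because `h⁻¹` is `C¹` with invertible differential there. Since `h⁻¹` pushes `ν`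
back to `μ`, the same argument applied to `h⁻¹` gives the converse. -/

theorem ContinuousOn.measurableSet_preimage_inter {α β : Type*} [TopologicalSpace α]
    [MeasurableSpace α] [OpensMeasurableSpace α] [TopologicalSpace β] [MeasurableSpace β]
    [BorelSpace β] {f : α → β} {s : Set α} {t : Set β} (hf : ContinuousOn f s)
    (hs : MeasurableSet s) (ht : MeasurableSet t) : MeasurableSet (f ⁻¹' t ∩ s) := by
  rw [inter_comm, ← Subtype.image_preimage_coe]
  exact (MeasurableEmbedding.subtype_coe hs).measurableSet_image.2
    ((continuousOn_iff_continuous_domRestrict.mp hf).measurable ht)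

theorem measurable_indicator_of_measurable_domRestrict {α β : Type*} [MeasurableSpace α]
    [MeasurableSpace β] [Zero β] {s : Set α} {f : α → β} (hs : MeasurableSet s)
    (hf : Measurable (s.domRestrict f)) : Measurable (s.indicator f) := by
  refine measurable_of_restrict_of_restrict_compl hs ?_ ?_
  · convert hf using 1
    funext x
    exact indicator_of_mem x.2 f
  · convert measurable_const (a := (0 : β)) using 1
    funext x
    exact indicator_of_notMem x.2 f

section transportDensity

variable {E : Type*} [NormedAddCommGroup E] [NormedSpace ℝ E]

/-- The density on `S'` of the image under `g⁻¹` of the measure with density `q`. -/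
def transportDensity (g : E → E) (S' : Set E) (q : E → ENNReal) : E → ENNReal :=
  S'.indicator fun y => q (g y) * ENNReal.ofReal |(fderiv ℝ g y).det|

theorem measurable_transportDensity [CompleteSpace E] [MeasurableSpace E] [BorelSpace E]
    {g : E → E} {S' : Set E} {q : E → ENNReal} (hS' : MeasurableSet S') (hg : ContinuousOn g S')
    (hq : Measurable q) :
    Measurable (transportDensity g S' q) := by
  have hdet : Measurable fun y => ENNReal.ofReal |(fderiv ℝ g y).det| :=
    ENNReal.measurable_ofReal.comp
      (ContinuousLinearMap.continuous_det.measurable.comp (measurable_fderiv ℝ g)).abs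
  refine measurable_indicator_of_measurable_domRestrict hS' ?_
  exact (hq.comp (continuousOn_iff_continuous_domRestrict.mp hg).measurable).mul
    (hdet.comp measurable_subtype_coe)

theorem continuousAt_transportDensity {g : E → E} {S' : Set E} {q : E → ENNReal} {w : E}
    (hS' : S' ∈ 𝓝 w) (hg : ContinuousAt g w) (hg' : ContinuousAt (fderiv ℝ g) w)
    (hdet : (fderiv ℝ g w).det ≠ 0) (hq : ContinuousAt q (g w)) :
    ContinuousAt (transportDensity g S' q) w := by
  have hJ : ContinuousAt (fun y => ENNReal.ofReal |(fderiv ℝ g y).det|) w :=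
    (ENNReal.continuous_ofReal.comp
      (continuous_abs.comp ContinuousLinearMap.continuous_det)).continuousAt.comp hg'
  have hF : ContinuousAt (fun y => q (g y) * ENNReal.ofReal |(fderiv ℝ g y).det|) w :=
    ENNReal.Tendsto.mul (hq.comp hg) (Or.inr ENNReal.ofReal_ne_top) hJ
      (Or.inl (by simpa using hdet))
  exact hF.congr (Filter.eventuallyEq_of_mem hS' eqOn_indicator).symm

end transportDensity

namespace IsSmoothDiffeoOn

variable {d : ℕ} {f g : Euc d → Euc d} {S S' : Set (Euc d)}

theorem symm (hd : IsSmoothDiffeoOn f g S S') : IsSmoothDiffeoOn g f S' S :=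
  ⟨hd.mapsTo_inv, hd.mapsTo, hd.right_inv, hd.left_inv, hd.smooth_inv, hd.smooth⟩

theorem injOn (hd : IsSmoothDiffeoOn f g S S') : InjOn f S := fun a ha b hb hab => by
  rw [← hd.left_inv a ha, ← hd.left_inv b hb, hab]

theorem image_preimage_inter (hd : IsSmoothDiffeoOn f g S S') (A : Set (Euc d)) :
    f '' (f ⁻¹' A ∩ S) = A ∩ S' := by
  refine Subset.antisymm ?_ fun y ⟨hyA, hy⟩ => ⟨g y, ?_, hd.right_inv y hy⟩
  · rintro _ ⟨x, ⟨hxA, hx⟩, rfl⟩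
    exact ⟨hxA, hd.mapsTo hx⟩
  · exact ⟨by rwa [mem_preimage, hd.right_inv y hy], hd.mapsTo_inv hy⟩

theorem differentiableAt (hd : IsSmoothDiffeoOn f g S S') (hS : IsOpen S) {x : Euc d}
    (hx : x ∈ S) : DifferentiableAt ℝ f x :=
  (hd.smooth.contDiffAt (hS.mem_nhds hx)).differentiableAt (by simp)

theorem continuousOn_fderiv (hd : IsSmoothDiffeoOn f g S S') (hS : IsOpen S) :
    ContinuousOn (fderiv ℝ f) S :=
  hd.smooth.continuousOn_fderiv_of_isOpen hS (by exact_mod_cast le_top)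

theorem det_fderiv_inv_mul_det_fderiv (hd : IsSmoothDiffeoOn f g S S') (hS : IsOpen S)
    (hS' : IsOpen S') {x : Euc d} (hx : x ∈ S) :
    (fderiv ℝ g (f x)).det * (fderiv ℝ f x).det = 1 := by
  have hgf : g ∘ f =ᶠ[𝓝 x] id := Filter.eventuallyEq_of_mem (hS.mem_nhds hx) hd.left_inv
  have hcomp : (fderiv ℝ g (f x)).comp (fderiv ℝ f x) = ContinuousLinearMap.id ℝ (Euc d) := by
    rw [← fderiv_comp x (hd.symm.differentiableAt hS' (hd.mapsTo hx)) (hd.differentiableAt hS hx),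
      hgf.fderiv_eq, fderiv_id]
  have hdet : ((fderiv ℝ g (f x)).comp (fderiv ℝ f x)).det = 1 := by
    rw [hcomp]
    exact LinearMap.det_id
  rwa [ContinuousLinearMap.det, ContinuousLinearMap.toLinearMap_comp, LinearMap.det_comp] at hdet

theorem abs_det_fderiv_mul_transportDensity (hd : IsSmoothDiffeoOn f g S S') (hS : IsOpen S)
    (hS' : IsOpen S') (q : Euc d → ENNReal) {x : Euc d} (hx : x ∈ S) :
    ENNReal.ofReal |(fderiv ℝ f x).det| * transportDensity g S' q (f x) = q x := by
  rw [transportDensity, indicator_of_mem (hd.mapsTo hx), hd.left_inv x hx, mul_left_comm,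
    ← ENNReal.ofReal_mul (abs_nonneg _), ← abs_mul, mul_comm (fderiv ℝ f x).det,
    hd.det_fderiv_inv_mul_det_fderiv hS hS' hx]
  simp

theorem map_restrict_withDensity (hd : IsSmoothDiffeoOn f g S S') (hS : IsOpen S)
    (hS' : IsOpen S') (q : Euc d → ENNReal) :
    Measure.map f ((volume.withDensity q).restrict S) =
      volume.withDensity (transportDensity g S' q) := by
  refine Measure.ext fun A hA => ?_
  have hSm := hS.measurableSet
  have hS'm := hS'.measurableSet
  have hfA : MeasurableSet (f ⁻¹' A ∩ S) :=
    hd.smooth.continuousOn.measurableSet_preimage_inter hSm hA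
  have hf' : ∀ x ∈ f ⁻¹' A ∩ S, HasFDerivWithinAt f (fderiv ℝ f x) (f ⁻¹' A ∩ S) x :=
    fun x hx => (hd.differentiableAt hS hx.2).hasFDerivAt.hasFDerivWithinAt
  rw [Measure.map_apply_of_aemeasurable (hd.smooth.continuousOn.aemeasurable hSm) hA,
    Measure.restrict_apply' hSm, withDensity_apply _ hfA, withDensity_apply _ hA]
  calc ∫⁻ x in f ⁻¹' A ∩ S, q x
      = ∫⁻ x in f ⁻¹' A ∩ S, ENNReal.ofReal |(fderiv ℝ f x).det| *
          transportDensity g S' q (f x) :=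
        setLIntegral_congr_fun hfA fun x hx =>
          (hd.abs_det_fderiv_mul_transportDensity hS hS' q hx.2).symm
    _ = ∫⁻ y in A ∩ S', transportDensity g S' q y := by
        rw [← hd.image_preimage_inter,
          lintegral_image_eq_lintegral_abs_det_fderiv_mul volume hfA hf'
            (hd.injOn.mono inter_subset_right)]
    _ = ∫⁻ y in A, transportDensity g S' q y := by
        rw [transportDensity, lintegral_indicator hS'm, lintegral_indicator hS'm,
          Measure.restrict_restrict hS'm, Measure.restrict_restrict hS'm, inter_comm A S',
          ← inter_assoc, inter_self]

theorem map_inv_restrict_map_restrict (hd : IsSmoothDiffeoOn f g S S') (hS : MeasurableSet S)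
    (hS' : MeasurableSet S') (σ : Measure (Euc d)) :
    Measure.map g ((Measure.map f (σ.restrict S)).restrict S') = σ.restrict S := by
  have hf : AEMeasurable f (σ.restrict S) := hd.smooth.continuousOn.aemeasurable hS
  have hS'_full : (Measure.map f (σ.restrict S)).restrict S' = Measure.map f (σ.restrict S) :=
    Measure.restrict_eq_self_of_ae_mem <| (ae_map_iff hf hS').2 <|
      ae_restrict_of_forall_mem hS fun x hx => hd.mapsTo hx
  have hg : AEMeasurable g (Measure.map f (σ.restrict S)) := by
    rw [← hS'_full]
    exact hd.smooth_inv.continuousOn.aemeasurable hS'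
  have hgf : g ∘ f =ᵐ[σ.restrict S] id := ae_restrict_of_forall_mem hS hd.left_inv
  rw [hS'_full, AEMeasurable.map_map_of_aemeasurable hg hf, Measure.map_congr hgf, Measure.map_id]

theorem hasNonRemovableDiscont_of_map_restrict (hd : IsSmoothDiffeoOn f g S S') (hS : IsOpen S)
    (hS' : IsOpen S') (σ : Measure (Euc d)) {w : Euc d} (hw : w ∈ S')
    (H : HasNonRemovableDiscont (Measure.map f (σ.restrict S)) w) :
    HasNonRemovableDiscont σ (g w) := by
  rintro q hq rfl hqc
  have hdet : (fderiv ℝ g w).det ≠ 0 := by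
    have := hd.symm.det_fderiv_inv_mul_det_fderiv hS' hS hw
    exact right_ne_zero_of_mul (this ▸ one_ne_zero)
  refine H _ (measurable_transportDensity hS'.measurableSet hd.smooth_inv.continuousOn hq)
    (hd.map_restrict_withDensity hS hS' q) ?_
  exact continuousAt_transportDensity (hS'.mem_nhds hw)
    (hd.smooth_inv.continuousOn.continuousAt (hS'.mem_nhds hw))
    ((hd.symm.continuousOn_fderiv hS').continuousAt (hS'.mem_nhds hw)) hdet hqc

end IsSmoothDiffeoOn

theorem nonremovable_discontinuity_preservation_general
    {d : ℕ} {Z Z' : Set (Euc d)} (hZ : IsOpen Z) (hZ' : IsOpen Z')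
    {h hinv : Euc d → Euc d} (hdiff : IsSmoothDiffeoOn h hinv Z Z')
    (μ : Measure (Euc d))
    (hμZ : μ (Set.univ \ Z) = 0)
    (ν : Measure (Euc d)) (hν : ν = Measure.map h (μ.restrict Z)) :
    ∀ z' ∈ Z', (HasNonRemovableDiscont ν z' ↔ HasNonRemovableDiscont μ (hinv z')) := by
  intro z' hz'
  have hμ : μ.restrict Z = μ :=
    Measure.restrict_eq_self_of_ae_mem (ae_iff.2 (by rwa [← compl_eq_univ_sdiff] at hμZ))
  have hν_back : Measure.map hinv (ν.restrict Z') = μ := by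
    rw [hν, hdiff.map_inv_restrict_map_restrict hZ.measurableSet hZ'.measurableSet, hμ]
  constructor
  · exact fun H => hdiff.hasNonRemovableDiscont_of_map_restrict hZ hZ' μ hz' (hν ▸ H)
  · intro H
    have := hdiff.symm.hasNonRemovableDiscont_of_map_restrict hZ' hZ ν (hdiff.mapsTo_inv hz')
      (hν_back ▸ H)
    rwa [hdiff.right_inv z' hz'] at this

/-- **Non-removable discontinuity preservation theorem.** -/
theorem nonremovable_discontinuity_preservation
    {d : ℕ} {Z Z' : Set (Euc d)} (hZ : IsOpen Z) (hZ' : IsOpen Z')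
    {h hinv : Euc d → Euc d} (hdiff : IsSmoothDiffeoOn h hinv Z Z')
    (μ : Measure (Euc d)) [IsProbabilityMeasure μ]
    (hμZ : μ (Set.univ \ Z) = 0) (hac : μ ≪ volume)
    (ν : Measure (Euc d)) (hν : ν = Measure.map h (μ.restrict Z)) :
    ∀ z' ∈ Z', (HasNonRemovableDiscont ν z' ↔ HasNonRemovableDiscont μ (hinv z')) :=
  nonremovable_discontinuity_preservation_general hZ hZ' hdiff μ hμZ ν hν
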